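/- arXiv:2507.19623 — 6 statements merged into one kernel-verified Lean document; each statement's English description precedes it below -/
import Mathlib

section
/- Let p and I be positive integers with 1 ≤ I ≤ p, and let δ̃, Γ̃ ∈ ℝ^p with δ̃_j ≠ 0 for every j. Suppose there exists at least one pair (α⁰, γ⁰) ∈ ℝ^p × ℝ with ‖α⁰‖₀ < I such that Γ̃ = α⁰ + γ⁰ δ̃. Call a subset C ⊆ {1,…,p} with |C| = p − I + 1 a candidate set if there is a constant q ∈ ℝ with Γ̃_j = q δ̃_j for all j ∈ C (this q is uniquely determined by C since δ̃_j ≠ 0; denote it q_C). Let C_1,…,C_{M₁} enumerate all candidate sets. Then there is a unique pair (α, γ) with ‖α‖₀ < I satisfying Γ̃ = α + γ δ̃ if and only if q_{C_1} = q_{C_2} = ⋯ = q_{C_{M₁}}. -/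
/-- The number of nonzero entries of a vector (the "ℓ₀-norm"). -/
noncomputable def sparsity {p : ℕ} (α : Fin p → ℝ) : ℕ :=
  (Finset.univ.filter fun j => α j ≠ 0).card

/-- **Identifiability with some invalid proxies (Theorem 1).**
Let `δ, Γ ∈ ℝ^p` with every `δ j ≠ 0`, let `1 ≤ I ≤ p`, and suppose there exists at
least one pair `(α⁰, γ⁰)` with `‖α⁰‖₀ < I` and `Γ = α⁰ + γ⁰ • δ`.  A set
`C ⊆ {1,…,p}` of cardinality `p - I + 1` is a candidate set if `Γ j = q * δ j` for all
`j ∈ C` for some constant `q` (which is then uniquely determined by `C`).  There is a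
unique pair `(α, γ)` with `‖α‖₀ < I` solving `Γ = α + γ • δ` if and only if all the
constants `q` associated to candidate sets coincide. -/
theorem unique_sparse_solution_iff_candidate_constants_agree
    {p I : ℕ} (hI1 : 1 ≤ I) (hIp : I ≤ p)
    (δ Γ : Fin p → ℝ) (hδ : ∀ j, δ j ≠ 0)
    (hex : ∃ (α₀ : Fin p → ℝ) (γ₀ : ℝ), sparsity α₀ < I ∧ Γ = α₀ + γ₀ • δ) :
    (∃! s : (Fin p → ℝ) × ℝ, sparsity s.1 < I ∧ Γ = s.1 + s.2 • δ) ↔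
      (∀ (C₁ C₂ : Finset (Fin p)) (q₁ q₂ : ℝ),
        C₁.card = p - I + 1 → C₂.card = p - I + 1 →
        (∀ j ∈ C₁, Γ j = q₁ * δ j) → (∀ j ∈ C₂, Γ j = q₂ * δ j) → q₁ = q₂) := by
  obtain ⟨α₀, γ₀, hs₀, hΓ₀⟩ := hex
  constructor
  · rintro ⟨s, hs, huniq⟩ C₁ C₂ q₁ q₂ hc₁ hc₂ hq₁ hq₂
    have key : ∀ (C : Finset (Fin p)) (q : ℝ), C.card = p - I + 1 →
        (∀ j ∈ C, Γ j = q * δ j) → q = s.2 := by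
      intro C q hc hq
      have hsp : sparsity (Γ - q • δ) < I := by
        have hsub : (Finset.univ.filter fun j => (Γ - q • δ) j ≠ 0) ⊆ Cᶜ := by
          intro j hj
          simp only [Finset.mem_filter, Pi.sub_apply, Pi.smul_apply, smul_eq_mul] at hj
          simp only [Finset.mem_compl]
          intro hjC
          exact hj.2 (by rw [hq j hjC]; ring)
        have h1 := Finset.card_le_card hsub
        have hcc : Cᶜ.card = p - C.card := by
          rw [Finset.card_compl, Fintype.card_fin]
        unfold sparsity
        omega
      have := huniq (Γ - q • δ, q) ⟨hsp, by ext j; simp⟩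
      exact congrArg Prod.snd this
    rw [key C₁ q₁ hc₁ hq₁, key C₂ q₂ hc₂ hq₂]
  · intro hagree
    have ext : ∀ (α' : Fin p → ℝ) (γ' : ℝ), sparsity α' < I → Γ = α' + γ' • δ →
        ∃ C : Finset (Fin p), C.card = p - I + 1 ∧ ∀ j ∈ C, Γ j = γ' * δ j := by
      intro α' γ' hs hΓ'
      have hsum := Finset.card_filter_add_card_filter_not
        (s := (Finset.univ : Finset (Fin p))) (p := fun j => α' j ≠ 0)
      simp only [Finset.card_univ, Fintype.card_fin, not_not] at hsum
      have hz : p - I + 1 ≤ (Finset.univ.filter fun j => α' j = 0).card := by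
        unfold sparsity at hs; omega
      obtain ⟨C, hCsub, hCcard⟩ := Finset.exists_subset_card_eq hz
      refine ⟨C, hCcard, fun j hj => ?_⟩
      have hj0 : α' j = 0 := by
        have := hCsub hj
        simpa using this
      have := congrFun hΓ' j
      simp only [Pi.add_apply, Pi.smul_apply, smul_eq_mul, hj0] at this
      linarith [this]
    refine ⟨(α₀, γ₀), ⟨hs₀, hΓ₀⟩, ?_⟩
    rintro ⟨α, γ⟩ ⟨hsα, hΓα⟩
    obtain ⟨C₁, hc₁, hq₁⟩ := ext α γ hsα hΓα
    obtain ⟨C₂, hc₂, hq₂⟩ := ext α₀ γ₀ hs₀ hΓ₀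
    have hγ : γ = γ₀ := hagree C₁ C₂ γ γ₀ hc₁ hc₂ hq₁ hq₂
    have hα : α = α₀ := by
      funext j
      have h1 := congrFun hΓα j
      have h2 := congrFun hΓ₀ j
      simp only [Pi.add_apply, Pi.smul_apply, smul_eq_mul] at h1 h2
      rw [hγ] at h1
      linarith
    simp [hα, hγ]
end

section
/- Let p and I be positive integers with 1 ≤ I ≤ p/2, and let δ̃, Γ̃ ∈ ℝ^p with δ̃_j ≠ 0 for every j. If there exists a pair (α⁰, γ⁰) ∈ ℝ^p × ℝ with ‖α⁰‖₀ < I such that Γ̃ = α⁰ + γ⁰ δ̃, then this pair is the unique solution: any (α, γ) with ‖α‖₀ < I and Γ̃ = α + γ δ̃ satisfies α = α⁰ and γ = γ⁰. -/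
/-- **Majority rule identification (Corollary 1).**
If `1 ≤ I ≤ p/2`, every `δ j ≠ 0`, and `(α⁰, γ⁰)` satisfies `‖α⁰‖₀ < I` and
`Γ = α⁰ + γ⁰ • δ`, then `(α⁰, γ⁰)` is the unique such solution: any `(α, γ)` with
`‖α‖₀ < I` and `Γ = α + γ • δ` equals `(α⁰, γ⁰)`. -/
theorem majority_rule_unique_solution
    {p I : ℕ} (hI1 : 1 ≤ I) (hIp : 2 * I ≤ p)
    (δ Γ : Fin p → ℝ) (hδ : ∀ j, δ j ≠ 0)
    (α₀ : Fin p → ℝ) (γ₀ : ℝ) (h₀ : sparsity α₀ < I) (hΓ₀ : Γ = α₀ + γ₀ • δ) :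
    ∀ (α : Fin p → ℝ) (γ : ℝ), sparsity α < I → Γ = α + γ • δ → α = α₀ ∧ γ = γ₀ := by
  intro α γ hs hΓ
  have hγ : γ = γ₀ := by
    by_contra hne
    -- α₀ j - α j = (γ - γ₀) * δ j for all j, RHS nonzero everywhere
    have key : ∀ j, α₀ j ≠ 0 ∨ α j ≠ 0 := by
      intro j
      by_contra h
      push_neg at h
      have h1 := congrFun hΓ₀ j
      have h2 := congrFun hΓ j
      simp only [Pi.add_apply, Pi.smul_apply, smul_eq_mul, h.1, h.2, zero_add] at h1 h2
      have : γ₀ = γ := mul_right_cancel₀ (hδ j) (h1 ▸ h2)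
      exact hne this.symm
    have hsub : (Finset.univ : Finset (Fin p)) ⊆
        (Finset.univ.filter fun j => α₀ j ≠ 0) ∪ (Finset.univ.filter fun j => α j ≠ 0) := by
      intro j _
      rcases key j with h | h
      · exact Finset.mem_union_left _ (Finset.mem_filter.2 ⟨Finset.mem_univ j, h⟩)
      · exact Finset.mem_union_right _ (Finset.mem_filter.2 ⟨Finset.mem_univ j, h⟩)
    have hcard : p ≤ sparsity α₀ + sparsity α := by
      calc p = (Finset.univ : Finset (Fin p)).card := by simp
        _ ≤ _ := Finset.card_le_card hsub
        _ ≤ _ := Finset.card_union_le _ _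
    omega
  subst hγ
  refine ⟨?_, rfl⟩
  funext j
  have h1 := congrFun hΓ₀ j
  have h2 := congrFun hΓ j
  simp only [Pi.add_apply, Pi.smul_apply, smul_eq_mul] at h1 h2
  linarith
end

section
/- Let (Ω, F, P) be a probability space, let p be a positive integer, and let Γ̂_n, δ̂_n : Ω → ℝ^p be sequences of random vectors. Suppose there exist α ∈ ℝ^p, γ ∈ ℝ and δ* ∈ ℝ^p with δ*_j ≠ 0 for all j, such that Γ̂_n converges in probability to α + γ δ* and δ̂_n converges in probability to δ*. Suppose moreover that |{j : α_j ≠ 0}| < p/2. Define π̂_{n,j} = Γ̂_{n,j} / δ̂_{n,j} (on the event δ̂_{n,j} ≠ 0) and γ̂_n^m = median(π̂_{n,1}, …, π̂_{n,p}). Then γ̂_n^m converges in probability to γ. -/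
/-- The median of a vector `v ∈ ℝ^p`, defined via the nondecreasing rearrangement
`v₍₁₎ ≤ ⋯ ≤ v₍ₚ₎` as `v₍₍ₚ₊₁₎/₂₎` if `p` is odd and `(v₍ₚ/₂₎ + v₍ₚ/₂₊₁₎)/2` if `p`
is even (and `0` by convention when `p = 0`). -/
noncomputable def median : {p : ℕ} → (Fin p → ℝ) → ℝ
  | 0, _ => 0
  | (q + 1), v =>
    let w : Fin (q + 1) → ℝ := v ∘ Tuple.sort v
    if (q + 1) % 2 = 1 then w ⟨(q + 1) / 2, by omega⟩
    else (w ⟨(q + 1) / 2 - 1, by omega⟩ + w ⟨(q + 1) / 2, by omega⟩) / 2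

/-!
The ratios `Γ̂_{n,j} / δ̂_{n,j}` converge in probability to `(α_j + γ δ*_j) / δ*_j`, which is `γ`
for every valid proxy `α_j = 0`. The valid proxies form a strict majority, so whenever they all
lie in the interval `(γ - ε, γ + ε)`, so do both middle order statistics, and hence the median.
Thus `|γ̂ₙᵐ - γ| ≥ ε` forces some valid ratio to be `ε`-far from `γ`, an event whose probability
is bounded by a finite sum of terms tending to zero.
-/

open MeasureTheory Filter Finset Topology

/-- Pigeonhole: `T` meets both `{i | i ≤ j}` and `{i | j ≤ i}`, and monotonicity places `w j`
between the two entries found. -/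
lemma Monotone.apply_mem_of_ordConnected {α : Type*} [Preorder α] {m : ℕ} {w : Fin m → α}
    (hw : Monotone w) {s : Set α} (hs : s.OrdConnected) {T : Finset (Fin m)}
    (hT : ∀ i ∈ T, w i ∈ s) {j : Fin m} (hlo : m < j + 1 + #T) (hhi : j < #T) : w j ∈ s := by
  obtain ⟨i₁, hi₁⟩ := inter_nonempty_of_card_lt_card_add_card (subset_univ (Iic j))
    (subset_univ T) (by simpa [Fin.card_Iic] using hlo)
  obtain ⟨i₂, hi₂⟩ := inter_nonempty_of_card_lt_card_add_card (subset_univ (Ici j))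
    (subset_univ T) (by simp only [card_univ, Fintype.card_fin, Fin.card_Ici]; omega)
  rw [mem_inter, mem_Iic] at hi₁
  rw [mem_inter, mem_Ici] at hi₂
  exact hs.out (hT _ hi₁.2) (hT _ hi₂.2) ⟨hw hi₁.1, hw hi₂.1⟩

lemma median_mem_of_ordConnected {m : ℕ} (v : Fin m → ℝ) {s : Set ℝ} (hs : s.OrdConnected)
    {S : Finset (Fin m)} (hS : ∀ j ∈ S, v j ∈ s) (hm : m < 2 * #S) : median v ∈ s := by
  obtain _ | q := m
  · rw [eq_empty_of_isEmpty S] at hm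
    simp at hm
  set σ := Tuple.sort v
  have hw : Monotone (v ∘ σ) := Tuple.monotone_sort v
  have hmid : ∀ j : Fin (q + 1), q / 2 ≤ j → j ≤ (q + 1) / 2 → v (σ j) ∈ s := fun j h₁ h₂ =>
    hw.apply_mem_of_ordConnected hs (T := S.map σ.symm.toEmbedding)
      (fun i hi => hS _ (by simpa using hi)) (by rw [card_map]; omega) (by rw [card_map]; omega)
  rw [median]
  split_ifs
  · exact hmid _ (by simp; omega) le_rfl
  · have hlo := hmid ⟨(q + 1) / 2 - 1, by omega⟩ (by simp; omega) (by simp)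
    have hhi := hmid ⟨(q + 1) / 2, by omega⟩ (by simp; omega) le_rfl
    have hle : v (σ ⟨(q + 1) / 2 - 1, by omega⟩) ≤ v (σ ⟨(q + 1) / 2, by omega⟩) :=
      hw (by simp only [Fin.mk_le_mk]; omega)
    exact hs.out hlo hhi ⟨by simp only [Function.comp_apply]; linarith,
      by simp only [Function.comp_apply]; linarith⟩

namespace MeasureTheory

variable {Ω ι E F : Type*} [MeasurableSpace Ω] {μ : Measure Ω} {l : Filter ι}
  [PseudoMetricSpace E] [PseudoMetricSpace F]

lemma TendstoInMeasure.prodMk_const {X : ι → Ω → E} {Y : ι → Ω → F} {a : E} {b : F}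
    (hX : TendstoInMeasure μ X l fun _ => a) (hY : TendstoInMeasure μ Y l fun _ => b) :
    TendstoInMeasure μ (fun i ω => (X i ω, Y i ω)) l fun _ => (a, b) := by
  rw [tendstoInMeasure_iff_dist] at hX hY ⊢
  intro ε hε
  have hsub : ∀ i, {ω | ε ≤ dist (X i ω, Y i ω) (a, b)} ⊆
      {ω | ε ≤ dist (X i ω) a} ∪ {ω | ε ≤ dist (Y i ω) b} := fun i ω hω => by
    simpa [Prod.dist_eq, le_max_iff] using hω
  refine tendsto_nhds_bot_mono' (by simpa using (hX ε hε).add (hY ε hε)) fun i => ?_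
  exact (measure_mono (hsub i)).trans (measure_union_le _ _)

lemma TendstoInMeasure.comp_continuousAt_const {X : ι → Ω → E} {a : E} {g : E → F}
    (hX : TendstoInMeasure μ X l fun _ => a) (hg : ContinuousAt g a) :
    TendstoInMeasure μ (fun i ω => g (X i ω)) l fun _ => g a := by
  rw [tendstoInMeasure_iff_dist] at hX ⊢
  intro ε hε
  obtain ⟨δ, hδ, hgδ⟩ := Metric.continuousAt_iff.1 hg ε hε
  have hsub : ∀ i, {ω | ε ≤ dist (g (X i ω)) (g a)} ⊆ {ω | δ ≤ dist (X i ω) a} :=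
    fun i ω hω => not_lt.1 fun h => (not_lt.2 hω) (hgδ h)
  exact tendsto_nhds_bot_mono' (hX δ hδ) fun i => measure_mono (hsub i)

theorem tendstoInMeasure_median_of_majority {p : ℕ} {X : ι → Ω → Fin p → ℝ} {c : ℝ}
    (S : Finset (Fin p)) (hS : p < 2 * #S)
    (hX : ∀ j ∈ S, TendstoInMeasure μ (fun i ω => X i ω j) l fun _ => c) :
    TendstoInMeasure μ (fun i ω => median (X i ω)) l fun _ => c := by
  simp_rw [tendstoInMeasure_iff_dist] at hX ⊢
  intro ε hε
  have hsub : ∀ i, {ω | ε ≤ dist (median (X i ω)) c} ⊆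
      ⋃ j ∈ S, {ω | ε ≤ dist (X i ω j) c} := by
    intro i ω hω
    by_contra hfar
    simp only [Set.mem_iUnion, Set.mem_ofPred_eq, not_exists, not_le] at hfar
    have hball : (Metric.ball c ε).OrdConnected := by
      rw [Real.ball_eq_Ioo]; exact Set.ordConnected_Ioo
    exact not_lt.2 hω (Metric.mem_ball.1 (median_mem_of_ordConnected (X i ω) hball hfar hS))
  refine tendsto_nhds_bot_mono' (by simpa using tendsto_finsetSum S fun j hj => hX j hj ε hε)
    fun i => ?_
  exact (measure_mono (hsub i)).trans (measure_biUnion_finset_le _ _)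

end MeasureTheory

theorem median_ratio_estimator_consistent_general
    {Ω : Type*} [MeasurableSpace Ω] (P : Measure Ω)
    {p : ℕ}
    (Γhat δhat : ℕ → Ω → Fin p → ℝ)
    (α δstar : Fin p → ℝ) (γ : ℝ)
    (hδ : ∀ j, δstar j ≠ 0)
    (hΓ : ∀ j, TendstoInMeasure P (fun n ω => Γhat n ω j) atTop
      (fun _ => α j + γ * δstar j))
    (hδc : ∀ j, TendstoInMeasure P (fun n ω => δhat n ω j) atTop
      (fun _ => δstar j))
    (hmaj : 2 * (Finset.univ.filter fun j => α j ≠ 0).card < p) :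
    TendstoInMeasure P
      (fun n ω => median (fun j => Γhat n ω j / δhat n ω j)) atTop
      (fun _ => γ) := by
  have hvalid : p < 2 * #{j | α j = 0} := by
    have := card_filter_add_card_filter_not (s := univ) (fun j => α j = 0)
    simp only [← ne_eq, card_univ, Fintype.card_fin] at this
    omega
  refine tendstoInMeasure_median_of_majority _ hvalid fun j hj => ?_
  have hratio := ((hΓ j).prodMk_const (hδc j)).comp_continuousAt_const
    (continuousAt_fst.div continuousAt_snd (hδ j))
  simpa [(mem_filter.1 hj).2, hδ j] using hratio

/-- **Consistency of the median ratio estimator (Lemma 1).**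
If `Γ̂_n →ᵖ α + γ δ*` and `δ̂_n →ᵖ δ*` coordinatewise, with every `δ*_j ≠ 0` and
fewer than `p/2` nonzero coordinates of `α` (the majority validity rule), then the
median `γ̂ₙᵐ = median(Γ̂_{n,1}/δ̂_{n,1}, …, Γ̂_{n,p}/δ̂_{n,p})` of the ratio
estimators converges in probability to `γ`. -/
theorem median_ratio_estimator_consistent
    {Ω : Type*} [MeasurableSpace Ω] (P : Measure Ω) [IsProbabilityMeasure P]
    {p : ℕ} (hp : 0 < p)
    (Γhat δhat : ℕ → Ω → Fin p → ℝ)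
    (α δstar : Fin p → ℝ) (γ : ℝ)
    (hδ : ∀ j, δstar j ≠ 0)
    (hΓ : ∀ j, TendstoInMeasure P (fun n ω => Γhat n ω j) atTop
      (fun _ => α j + γ * δstar j))
    (hδc : ∀ j, TendstoInMeasure P (fun n ω => δhat n ω j) atTop
      (fun _ => δstar j))
    (hmaj : 2 * (Finset.univ.filter fun j => α j ≠ 0).card < p) :
    TendstoInMeasure P
      (fun n ω => median (fun j => Γhat n ω j / δhat n ω j)) atTop
      (fun _ => γ) :=
  median_ratio_estimator_consistent_general P Γhat δhat α δstar γ hδ hΓ hδc hmaj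
end

section
/- Let Y, D, W, ε ∈ ℝ^n, Z ∈ ℝ^{n×p}, A ⊆ {1,…,p}, α_A ∈ ℝ^{|A|}, β, γ ∈ ℝ satisfy Y = Dβ + Z_A α_A + Wγ + ε, where Z_A is the submatrix of Z consisting of the columns indexed by A. Set M = [Z D] with linearly independent columns, Ŵ = P_M W, and N̂_A = [Z_A Ŵ]; assume N̂_A has linearly independent columns and D^⊺ P_{N̂_A^⊥} D ≠ 0. Then: (i) P_{N̂_A^⊥} Z_A = 0; (ii) D^⊺ P_{N̂_A^⊥} W = 0; and consequently (iii) the oracle estimator β̂_or := (D^⊺ P_{N̂_A^⊥} Y)/(D^⊺ P_{N̂_A^⊥} D) satisfies β̂_or = β + (D^⊺ P_{N̂_A^⊥} ε)/(D^⊺ P_{N̂_A^⊥} D). -/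
open Matrix

/-- Orthogonal projection matrix onto the column space of `B`:  `P_B = B (Bᵀ B)⁻¹ Bᵀ`. -/
noncomputable def proj {n : ℕ} {ι : Type*} [Fintype ι] [DecidableEq ι]
    (B : Matrix (Fin n) ι ℝ) : Matrix (Fin n) (Fin n) ℝ :=
  B * (B.transpose * B)⁻¹ * B.transpose

/-- Orthogonal projection onto the span of a single vector `w`: `P_w = w wᵀ / (wᵀ w)`. -/
noncomputable def projVec {n : ℕ} (w : Fin n → ℝ) : Matrix (Fin n) (Fin n) ℝ :=
  (w ⬝ᵥ w)⁻¹ • Matrix.vecMulVec w w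

/-- Residual projection matrix `P_{B⊥} = I - P_B`. -/
noncomputable def projPerp {n : ℕ} {ι : Type*} [Fintype ι] [DecidableEq ι]
    (B : Matrix (Fin n) ι ℝ) : Matrix (Fin n) (Fin n) ℝ :=
  1 - proj B

/-- Residual projection onto the orthocomplement of a single vector `w`. -/
noncomputable def projVecPerp {n : ℕ} (w : Fin n → ℝ) : Matrix (Fin n) (Fin n) ℝ :=
  1 - projVec w

/-!
The projection `P_M` onto the column space of `M = [Z D]` fixes `D`, the columns of `Z_A` and
`Ŵ = P_M W`, hence fixes `N̂_A` and commutes with `P_{N̂_A⊥}`. Moving `P_M` across the inner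
product turns `Dᵀ P_{N̂_A⊥} W` into `Dᵀ P_{N̂_A⊥} Ŵ`, which vanishes because `Ŵ` is a column of
`N̂_A`; for the same reason `P_{N̂_A⊥}` kills `Z_A`. Substituting the model into the numerator
of `β̂_or`, only the `β` and `ε` terms survive.
-/

section Projection

variable {n : ℕ} {ι κ : Type*} [Fintype ι] [DecidableEq ι] [Fintype κ] [DecidableEq κ]

lemma isUnit_det_transpose_mul_self {B : Matrix (Fin n) ι ℝ} (hB : LinearIndependent ℝ Bᵀ) :
    IsUnit (Bᵀ * B).det := by
  have hpos := PosDef.conjTranspose_mul_self B (mulVec_injective_iff.mpr hB)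
  rw [conjTranspose_eq_transpose_of_trivial] at hpos
  exact hpos.det_pos.ne'.isUnit

lemma proj_mul_self {B : Matrix (Fin n) ι ℝ} (hB : LinearIndependent ℝ Bᵀ) :
    proj B * B = B := by
  rw [proj, Matrix.mul_assoc, Matrix.mul_assoc,
    nonsing_inv_mul _ (isUnit_det_transpose_mul_self hB), Matrix.mul_one]

lemma projPerp_mul_self {B : Matrix (Fin n) ι ℝ} (hB : LinearIndependent ℝ Bᵀ) :
    projPerp B * B = 0 := by
  rw [projPerp, Matrix.sub_mul, Matrix.one_mul, proj_mul_self hB, sub_self]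

lemma proj_transpose (B : Matrix (Fin n) ι ℝ) : (proj B)ᵀ = proj B := by
  rw [proj, transpose_mul, transpose_mul, transpose_transpose, transpose_nonsing_inv,
    transpose_mul, transpose_transpose, Matrix.mul_assoc]

lemma mul_proj_of_mul_eq {P : Matrix (Fin n) (Fin n) ℝ} {C : Matrix (Fin n) κ ℝ}
    (h : P * C = C) : P * proj C = proj C := by
  rw [proj, ← Matrix.mul_assoc, ← Matrix.mul_assoc, h]

lemma proj_mul_proj {B : Matrix (Fin n) ι ℝ} (hB : LinearIndependent ℝ Bᵀ) :
    proj B * proj B = proj B :=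
  mul_proj_of_mul_eq (proj_mul_self hB)

lemma proj_mul_of_mul_eq {P : Matrix (Fin n) (Fin n) ℝ} (hP : Pᵀ = P) {C : Matrix (Fin n) κ ℝ}
    (h : P * C = C) : proj C * P = proj C := by
  simpa only [transpose_mul, hP, proj_transpose] using congrArg transpose (mul_proj_of_mul_eq h)

-- Both products equal `P_B - P_C`.
lemma proj_mul_projPerp_comm {B : Matrix (Fin n) ι ℝ} {C : Matrix (Fin n) κ ℝ}
    (h : proj B * C = C) : proj B * projPerp C = projPerp C * proj B := by
  rw [projPerp, Matrix.mul_sub, Matrix.sub_mul, mul_proj_of_mul_eq h,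
    proj_mul_of_mul_eq (proj_transpose B) h, Matrix.mul_one, Matrix.one_mul]

lemma dotProduct_projPerp_mulVec_eq_zero {B : Matrix (Fin n) ι ℝ} {C : Matrix (Fin n) κ ℝ}
    (hC : LinearIndependent ℝ Cᵀ) (hBC : proj B * C = C) {d w : Fin n → ℝ}
    (hd : proj B *ᵥ d = d) {j : κ} (hw : proj B *ᵥ w = Cᵀ j) :
    d ⬝ᵥ (projPerp C *ᵥ w) = 0 := by
  have hCj : projPerp C *ᵥ Cᵀ j = 0 := by
    change (projPerp C * C)ᵀ j = 0
    rw [projPerp_mul_self hC, transpose_zero]; rfl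
  calc d ⬝ᵥ (projPerp C *ᵥ w)
      = d ⬝ᵥ (proj B *ᵥ (projPerp C *ᵥ w)) := by
        rw [dotProduct_mulVec d (proj B), ← proj_transpose B, vecMul_transpose, hd]
    _ = d ⬝ᵥ (projPerp C *ᵥ (proj B *ᵥ w)) := by
        rw [mulVec_mulVec, mulVec_mulVec, proj_mul_projPerp_comm hBC]
    _ = 0 := by rw [hw, hCj, dotProduct_zero]

end Projection

lemma dotProduct_mulVec_eq_of_model {n : ℕ} {ι : Type*} [Fintype ι]
    {P : Matrix (Fin n) (Fin n) ℝ} {Y D W ε : Fin n → ℝ} {Z : Matrix (Fin n) ι ℝ} {α : ι → ℝ}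
    {β γ : ℝ} (hY : Y = β • D + Z *ᵥ α + γ • W + ε) (hZ : P * Z = 0)
    (hW : D ⬝ᵥ (P *ᵥ W) = 0) :
    D ⬝ᵥ (P *ᵥ Y) = β * D ⬝ᵥ (P *ᵥ D) + D ⬝ᵥ (P *ᵥ ε) := by
  simp only [hY, mulVec_add, mulVec_smul, mulVec_mulVec, hZ, zero_mulVec, dotProduct_add,
    dotProduct_smul, hW, smul_eq_mul, mul_zero, add_zero]

/-- **Decomposition of the oracle estimator.**
In the model `Y = Dβ + Z_A α_A + Wγ + ε`, where `Z_A` consists of the columns of `Z`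
indexed by the set `A` of invalid proxies, with `M = [Z D]` of full column rank,
`Ŵ = P_M W`, and `N̂_A = [Z_A Ŵ]` of full column rank with `Dᵀ P_{N̂_A⊥} D ≠ 0`:
(i) `P_{N̂_A⊥} Z_A = 0`; (ii) `Dᵀ P_{N̂_A⊥} W = 0`; and consequently (iii) the oracle
estimator `β̂_or = (Dᵀ P_{N̂_A⊥} Y)/(Dᵀ P_{N̂_A⊥} D)` equals
`β + (Dᵀ P_{N̂_A⊥} ε)/(Dᵀ P_{N̂_A⊥} D)`. -/
theorem oracle_estimator_decomposition
    {n p : ℕ} (Y D W ε : Fin n → ℝ) (Z : Matrix (Fin n) (Fin p) ℝ)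
    (A : Finset (Fin p)) (αA : {j // j ∈ A} → ℝ) (β γ : ℝ)
    (ZA : Matrix (Fin n) {j // j ∈ A} ℝ)
    (hZA : ZA = Z.submatrix id Subtype.val)
    (hmodel : Y = β • D + ZA *ᵥ αA + γ • W + ε)
    (M : Matrix (Fin n) (Fin (p + 1)) ℝ)
    (hM : M = Matrix.of fun i j => Fin.lastCases (D i) (fun k => Z i k) j)
    (hMrank : LinearIndependent ℝ M.transpose)
    (What : Fin n → ℝ) (hWhat : What = proj M *ᵥ W)
    (NA : Matrix (Fin n) ({j // j ∈ A} ⊕ Unit) ℝ)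
    (hNA : NA = Matrix.of fun i j => Sum.elim (fun a => ZA i a) (fun _ => What i) j)
    (hNArank : LinearIndependent ℝ NA.transpose)
    (hden : D ⬝ᵥ (projPerp NA *ᵥ D) ≠ 0) :
    projPerp NA * ZA = 0 ∧
      D ⬝ᵥ (projPerp NA *ᵥ W) = 0 ∧
      (D ⬝ᵥ (projPerp NA *ᵥ Y)) / (D ⬝ᵥ (projPerp NA *ᵥ D)) =
        β + (D ⬝ᵥ (projPerp NA *ᵥ ε)) / (D ⬝ᵥ (projPerp NA *ᵥ D)) := by
  have hNA_cols : NA = fromCols ZA (replicateCol Unit What) := by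
    rw [hNA]; ext i (a | u) <;> rfl
  have hZA_M : ZA = M.submatrix id (Fin.castSucc ∘ Subtype.val) := by
    rw [hZA, hM]; ext i a; simp
  have hD_M : D = Mᵀ (Fin.last p) := by
    rw [hM]; ext i; simp
  have hPM : proj M * M = M := proj_mul_self hMrank
  have hPM_D : proj M *ᵥ D = D := by
    rw [hD_M]; exact congrFun (congrArg transpose hPM) (Fin.last p)
  have hPM_What : proj M *ᵥ What = What := by
    rw [hWhat, mulVec_mulVec, proj_mul_proj hMrank]
  have hPM_ZA : proj M * ZA = ZA := by
    rw [hZA_M]; exact congrArg (submatrix · id _) hPM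
  have hPM_NA : proj M * NA = NA := by
    rw [hNA_cols, mul_fromCols, ← replicateCol_mulVec, hPM_What, hPM_ZA]
  have hi : projPerp NA * ZA = 0 := by
    have h0 : projPerp NA * fromCols ZA (replicateCol Unit What) = 0 := by
      rw [← hNA_cols]; exact projPerp_mul_self hNArank
    rw [mul_fromCols, ← fromCols_zero, fromCols_inj.eq_iff] at h0
    exact h0.1
  have hii : D ⬝ᵥ (projPerp NA *ᵥ W) = 0 :=
    dotProduct_projPerp_mulVec_eq_zero hNArank hPM_NA hPM_D (j := Sum.inr ())
      (by rw [← hWhat, hNA_cols]; rfl)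
  refine ⟨hi, hii, ?_⟩
  rw [dotProduct_mulVec_eq_of_model hmodel hi hii, add_div, mul_div_cancel_right₀ _ hden]
end

section
/- Let Y, D, W, ε ∈ ℝ^n, Z ∈ ℝ^{n×p}, α ∈ ℝ^p, β, γ ∈ ℝ satisfy Y = Dβ + Zα + Wγ + ε. Set M = [Z D] with linearly independent columns, Ŵ = P_M W ≠ 0, D̃ = P_{Ŵ⊥} D ≠ 0, and Z̃ = P_{Ŵ⊥} Z. Then D̃^⊺(Y − Z̃α) = β‖D̃‖₂² + D̃^⊺ε; equivalently, substituting the true coefficient vector α into the second-step formula yields D̃^⊺(Y − Z̃α)/‖D̃‖₂² = β + D̃^⊺ε/‖D̃‖₂². -/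
open Matrix

/-!
`D̃ = D - cŴ` is orthogonal to `Ŵ` by construction, and orthogonal to the residual
`W - Ŵ = P_{M⊥} W` because both `D` and `Ŵ` lie in the column space of `M`; hence `D̃ ⊥ W`.
Moreover `Zα - Z̃α = P_Ŵ Zα` is a multiple of `Ŵ`, so it is killed by `D̃`, and `D̃ᵀD = ‖D̃‖₂²`
since `D - D̃` is a multiple of `Ŵ`. Expanding `D̃ᵀ(Y - Z̃α)` along the model leaves `β‖D̃‖₂² + D̃ᵀε`.
-/

section projVec

variable {n : ℕ} (w : Fin n → ℝ)

lemma projVec_mulVec (v : Fin n → ℝ) :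
    projVec w *ᵥ v = ((w ⬝ᵥ w)⁻¹ * (w ⬝ᵥ v)) • w := by
  rw [projVec, smul_mulVec, vecMulVec_mulVec, op_smul_eq_smul, smul_smul]

lemma projVecPerp_mulVec (v : Fin n → ℝ) : projVecPerp w *ᵥ v = v - projVec w *ᵥ v := by
  rw [projVecPerp, sub_mulVec, one_mulVec]

lemma projVecPerp_mulVec_orthogonal (v : Fin n → ℝ) : projVecPerp w *ᵥ v ⬝ᵥ w = 0 := by
  rw [projVecPerp_mulVec, projVec_mulVec, sub_dotProduct, smul_dotProduct, smul_eq_mul,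
    dotProduct_comm v w]
  rcases eq_or_ne (w ⬝ᵥ w) 0 with hw | hw
  · simp [dotProduct_self_eq_zero.mp hw]
  · field_simp
    ring

lemma projVecPerp_mulVec_dotProduct_projVec_mulVec (u v : Fin n → ℝ) :
    projVecPerp w *ᵥ u ⬝ᵥ projVec w *ᵥ v = 0 := by
  rw [projVec_mulVec, dotProduct_smul, projVecPerp_mulVec_orthogonal, smul_zero]

lemma projVecPerp_mulVec_dotProduct_self (v : Fin n → ℝ) :
    projVecPerp w *ᵥ v ⬝ᵥ projVecPerp w *ᵥ v = projVecPerp w *ᵥ v ⬝ᵥ v := by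
  nth_rw 2 [projVecPerp_mulVec]
  rw [dotProduct_sub, projVecPerp_mulVec_dotProduct_projVec_mulVec, sub_zero]

lemma projVecPerp_mulVec_dotProduct_eq_zero {u x : Fin n → ℝ} (hu : u ⬝ᵥ x = 0)
    (hw : w ⬝ᵥ x = 0) : projVecPerp w *ᵥ u ⬝ᵥ x = 0 := by
  rw [projVecPerp_mulVec, projVec_mulVec, sub_dotProduct, smul_dotProduct, hu, hw, smul_zero,
    sub_zero]

end projVec

section proj

variable {n : ℕ} {ι : Type*} [Fintype ι] [DecidableEq ι] {B : Matrix (Fin n) ι ℝ}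

lemma isUnit_transpose_mul_self (hB : LinearIndependent ℝ Bᵀ) : IsUnit (Bᵀ * B) := by
  rw [← conjTranspose_eq_transpose_of_trivial]
  exact (PosDef.conjTranspose_mul_self B (mulVec_injective_iff.mpr hB)).isUnit

lemma transpose_mul_proj (hB : LinearIndependent ℝ Bᵀ) : Bᵀ * proj B = Bᵀ := by
  have hinv : Bᵀ * B * (Bᵀ * B)⁻¹ = 1 :=
    mul_nonsing_inv _ ((isUnit_iff_isUnit_det _).mp (isUnit_transpose_mul_self hB))
  rw [proj, ← Matrix.mul_assoc, ← Matrix.mul_assoc, hinv, Matrix.one_mul]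

lemma projPerp_mulVec (w : Fin n → ℝ) : projPerp B *ᵥ w = w - proj B *ᵥ w := by
  rw [projPerp, sub_mulVec, one_mulVec]

lemma mulVec_dotProduct_projPerp_mulVec (hB : LinearIndependent ℝ Bᵀ) (u : ι → ℝ)
    (w : Fin n → ℝ) : B *ᵥ u ⬝ᵥ projPerp B *ᵥ w = 0 := by
  rw [dotProduct_comm, dotProduct_mulVec, ← mulVec_transpose, projPerp_mulVec, mulVec_sub,
    mulVec_mulVec, transpose_mul_proj hB, sub_self, zero_dotProduct]

lemma proj_mulVec_dotProduct_projPerp_mulVec (hB : LinearIndependent ℝ Bᵀ) (v w : Fin n → ℝ) :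
    proj B *ᵥ v ⬝ᵥ projPerp B *ᵥ w = 0 := by
  rw [proj, ← mulVec_mulVec, ← mulVec_mulVec]
  exact mulVec_dotProduct_projPerp_mulVec hB _ w

end proj

theorem second_step_recovers_beta_general
    {n p : ℕ} (Y D W ε : Fin n → ℝ) (Z : Matrix (Fin n) (Fin p) ℝ)
    (α : Fin p → ℝ) (β γ : ℝ)
    (hmodel : Y = β • D + Z *ᵥ α + γ • W + ε)
    (M : Matrix (Fin n) (Fin (p + 1)) ℝ)
    (hM : M = Matrix.of fun i j => Fin.lastCases (D i) (fun k => Z i k) j)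
    (hMrank : LinearIndependent ℝ M.transpose)
    (What : Fin n → ℝ) (hWhat : What = proj M *ᵥ W)
    (Dtil : Fin n → ℝ) (hDtil : Dtil = projVecPerp What *ᵥ D) (hDne : Dtil ≠ 0)
    (Ztil : Matrix (Fin n) (Fin p) ℝ) (hZtil : Ztil = projVecPerp What * Z) :
    Dtil ⬝ᵥ (Y - Ztil *ᵥ α) = β * (Dtil ⬝ᵥ Dtil) + Dtil ⬝ᵥ ε ∧
      (Dtil ⬝ᵥ (Y - Ztil *ᵥ α)) / (Dtil ⬝ᵥ Dtil) =
        β + (Dtil ⬝ᵥ ε) / (Dtil ⬝ᵥ Dtil) := by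
  have hDcol : D = M *ᵥ Pi.single (Fin.last p) 1 := by
    ext i
    simp [hM]
  have hDtilW : Dtil ⬝ᵥ W = 0 := by
    have hW : W = What + projPerp M *ᵥ W := by rw [projPerp_mulVec, hWhat, add_sub_cancel]
    rw [hW, dotProduct_add, hDtil, projVecPerp_mulVec_orthogonal, zero_add]
    refine projVecPerp_mulVec_dotProduct_eq_zero _ ?_ ?_
    · rw [hDcol]
      exact mulVec_dotProduct_projPerp_mulVec hMrank _ W
    · rw [hWhat]
      exact proj_mulVec_dotProduct_projPerp_mulVec hMrank W W
  have hY : Y - Ztil *ᵥ α = β • D + projVec What *ᵥ (Z *ᵥ α) + γ • W + ε := by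
    rw [hmodel, hZtil, ← mulVec_mulVec, projVecPerp_mulVec]
    abel
  have hDtilD : Dtil ⬝ᵥ D = Dtil ⬝ᵥ Dtil := by rw [hDtil, projVecPerp_mulVec_dotProduct_self]
  have hDtilZ : Dtil ⬝ᵥ projVec What *ᵥ (Z *ᵥ α) = 0 := by
    rw [hDtil, projVecPerp_mulVec_dotProduct_projVec_mulVec]
  have key : Dtil ⬝ᵥ (Y - Ztil *ᵥ α) = β * (Dtil ⬝ᵥ Dtil) + Dtil ⬝ᵥ ε := by
    rw [hY, dotProduct_add, dotProduct_add, dotProduct_add, dotProduct_smul, dotProduct_smul,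
      hDtilD, hDtilZ, hDtilW, smul_eq_mul, smul_zero, add_zero, add_zero]
  have hDtilDtil : Dtil ⬝ᵥ Dtil ≠ 0 := fun h => hDne (dotProduct_self_eq_zero.mp h)
  refine ⟨key, ?_⟩
  rw [key, add_div, mul_div_cancel_right₀ _ hDtilDtil]

/-- **The second-step formula recovers the causal effect at the true coefficients.**
In the model `Y = Dβ + Zα + Wγ + ε` with `M = [Z D]` of full column rank,
`Ŵ = P_M W ≠ 0`, `D̃ = P_{Ŵ⊥} D ≠ 0` and `Z̃ = P_{Ŵ⊥} Z`, one has
`D̃ᵀ(Y - Z̃ α) = β ‖D̃‖₂² + D̃ᵀ ε`; equivalently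
`D̃ᵀ(Y - Z̃ α)/‖D̃‖₂² = β + D̃ᵀε/‖D̃‖₂²`. -/
theorem second_step_recovers_beta
    {n p : ℕ} (Y D W ε : Fin n → ℝ) (Z : Matrix (Fin n) (Fin p) ℝ)
    (α : Fin p → ℝ) (β γ : ℝ)
    (hmodel : Y = β • D + Z *ᵥ α + γ • W + ε)
    (M : Matrix (Fin n) (Fin (p + 1)) ℝ)
    (hM : M = Matrix.of fun i j => Fin.lastCases (D i) (fun k => Z i k) j)
    (hMrank : LinearIndependent ℝ M.transpose)
    (What : Fin n → ℝ) (hWhat : What = proj M *ᵥ W) (hWne : What ≠ 0)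
    (Dtil : Fin n → ℝ) (hDtil : Dtil = projVecPerp What *ᵥ D) (hDne : Dtil ≠ 0)
    (Ztil : Matrix (Fin n) (Fin p) ℝ) (hZtil : Ztil = projVecPerp What * Z) :
    Dtil ⬝ᵥ (Y - Ztil *ᵥ α) = β * (Dtil ⬝ᵥ Dtil) + Dtil ⬝ᵥ ε ∧
      (Dtil ⬝ᵥ (Y - Ztil *ᵥ α)) / (Dtil ⬝ᵥ Dtil) =
        β + (Dtil ⬝ᵥ ε) / (Dtil ⬝ᵥ Dtil) :=
  second_step_recovers_beta_general Y D W ε Z α β γ hmodel M hM hMrank What hWhat Dtil hDtil hDne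
    Ztil hZtil
end

section
/- Let (Ω, F, P) be a probability space, let p be a positive integer, let β ∈ ℝ, and let β̂_n^1, …, β̂_n^p : Ω → ℝ be sequences of random variables. Suppose there is a set V ⊆ {1,…,p} with |V| > p/2 such that for every j ∈ V, β̂_n^j converges in probability to β (no assumption is made on β̂_n^j for j ∉ V). Then the aggregated estimator β̂_n^{(p)} := median(β̂_n^1, …, β̂_n^p) converges in probability to β. -/
open MeasureTheory Filter Topology Finset

theorem Equiv.Perm.exists_mem_apply_mem_of_card_lt {α : Type*} [Fintype α] (σ : Equiv.Perm α)
    {T V : Finset α} (h : Fintype.card α < #T + #V) : ∃ k ∈ T, σ k ∈ V := by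
  classical
  obtain ⟨j, hj⟩ := inter_nonempty_of_card_lt_card_add_card
    (subset_univ (T.map σ.toEmbedding)) (subset_univ V) (by simpa using h)
  obtain ⟨hjT, hjV⟩ : σ.symm j ∈ T ∧ j ∈ V := by simpa using hj
  exact ⟨σ.symm j, hjT, by simpa using hjV⟩

theorem Tuple.sort_mem_of_card_lt {α : Type*} [LinearOrder α] {p : ℕ} {v : Fin p → α}
    {s : Set α} (hs : s.OrdConnected) {V : Finset (Fin p)} (hV : ∀ j ∈ V, v j ∈ s)
    {i : Fin p} (hlo : p - #V ≤ i) (hhi : (i : ℕ) < #V) : v (Tuple.sort v i) ∈ s := by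
  have hmono : Monotone (v ∘ Tuple.sort v) := Tuple.monotone_sort v
  obtain ⟨k, hki, hkV⟩ := (Tuple.sort v).exists_mem_apply_mem_of_card_lt (T := Iic i) (V := V)
    (by rw [Fintype.card_fin, Fin.card_Iic]; omega)
  obtain ⟨l, hil, hlV⟩ := (Tuple.sort v).exists_mem_apply_mem_of_card_lt (T := Ici i) (V := V)
    (by rw [Fintype.card_fin, Fin.card_Ici]; omega)
  exact hs.out (hV _ hkV) (hV _ hlV)
    ⟨hmono (mem_Iic.mp hki), hmono (mem_Ici.mp hil)⟩

theorem median_mem_of_card_lt {p : ℕ} {v : Fin p → ℝ} {s : Set ℝ} (hs : s.OrdConnected)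
    {V : Finset (Fin p)} (hV : p < 2 * #V) (h : ∀ j ∈ V, v j ∈ s) : median v ∈ s := by
  have hVp : #V ≤ p := by simpa using card_le_univ V
  obtain ⟨q, rfl⟩ : ∃ q, p = q + 1 := ⟨p - 1, by omega⟩
  rw [median]
  dsimp only [Function.comp_apply]
  split_ifs
  · exact Tuple.sort_mem_of_card_lt hs h (by simp; omega) (by simp; omega)
  · generalize ha' : v (Tuple.sort v ⟨(q + 1) / 2 - 1, by omega⟩) = a
    generalize hb' : v (Tuple.sort v ⟨(q + 1) / 2, by omega⟩) = b
    have ha : a ∈ s := ha' ▸ Tuple.sort_mem_of_card_lt hs h (by simp; omega) (by simp; omega)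
    have hb : b ∈ s := hb' ▸ Tuple.sort_mem_of_card_lt hs h (by simp; omega) (by simp; omega)
    refine hs.uIcc_subset ha hb (Set.mem_uIcc.mpr ?_)
    rcases le_total a b with hab | hab
    · exact Or.inl ⟨by linarith, by linarith⟩
    · exact Or.inr ⟨by linarith, by linarith⟩

theorem tendstoInMeasure_of_exists_le_dist {α ι κ E : Type*} [MeasurableSpace α]
    [PseudoMetricSpace E] {μ : Measure α} {l : Filter ι} {f : ι → α → E} {g : α → E}
    {V : Finset κ} {F : κ → ι → α → E} (hF : ∀ j ∈ V, TendstoInMeasure μ (F j) l g)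
    (hfF : ∀ ε > 0, ∀ i x, ε ≤ dist (f i x) (g x) → ∃ j ∈ V, ε ≤ dist (F j i x) (g x)) :
    TendstoInMeasure μ f l g := by
  rw [tendstoInMeasure_iff_dist]
  intro ε hε
  have hle : ∀ i, μ {x | ε ≤ dist (f i x) (g x)} ≤ ∑ j ∈ V, μ {x | ε ≤ dist (F j i x) (g x)} :=
    fun i => (measure_mono fun x hx => by simpa using hfF ε hε i x hx).trans
      (measure_biUnion_finset_le V _)
  have hsum : Tendsto (fun i => ∑ j ∈ V, μ {x | ε ≤ dist (F j i x) (g x)}) l (𝓝 0) := by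
    simpa using tendsto_finsetSum V fun j hj => tendstoInMeasure_iff_dist.mp (hF j hj) ε hε
  exact tendsto_of_tendsto_of_tendsto_of_le_of_le tendsto_const_nhds hsum (fun _ => zero_le) hle

theorem median_aggregation_consistent_general
    {Ω : Type*} [MeasurableSpace Ω] (P : Measure Ω)
    {p : ℕ} (β : ℝ)
    (βhat : ℕ → Ω → Fin p → ℝ)
    (V : Finset (Fin p)) (hV : p < 2 * V.card)
    (hconv : ∀ j ∈ V, TendstoInMeasure P (fun n ω => βhat n ω j) atTop
      (fun _ => β)) :
    TendstoInMeasure P (fun n ω => median (βhat n ω)) atTop (fun _ => β) := by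
  refine tendstoInMeasure_of_exists_le_dist hconv fun ε _ n ω hfar => ?_
  by_contra! hnear
  have hball : median (βhat n ω) ∈ Metric.ball β ε := by
    refine median_mem_of_card_lt ?_ hV hnear
    rw [Real.ball_eq_Ioo]
    exact Set.ordConnected_Ioo
  exact (Metric.mem_ball.mp hball).not_ge hfar

/-- **Consistency of the median aggregation estimator.**
If, for every index `j` in a set `V` containing strictly more than half of
`{1,…,p}`, the estimator `β̂ₙʲ` converges in probability to `β` (with no assumption
for `j ∉ V`), then the aggregated estimator `β̂ₙ⁽ᵖ⁾ = median(β̂ₙ¹, …, β̂ₙᵖ)`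
converges in probability to `β`. -/
theorem median_aggregation_consistent
    {Ω : Type*} [MeasurableSpace Ω] (P : Measure Ω) [IsProbabilityMeasure P]
    {p : ℕ} (hp : 0 < p) (β : ℝ)
    (βhat : ℕ → Ω → Fin p → ℝ)
    (V : Finset (Fin p)) (hV : p < 2 * V.card)
    (hconv : ∀ j ∈ V, TendstoInMeasure P (fun n ω => βhat n ω j) atTop
      (fun _ => β)) :
    TendstoInMeasure P (fun n ω => median (βhat n ω)) atTop (fun _ => β) :=
  median_aggregation_consistent_general P β βhat V hV hconv
end
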